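/- For every k ≥ 1 and every y ∈ [1/3, 1], the optimal threshold function satisfies g_k(y) = y. -/
import Mathlib


open MeasureTheory Set Filter

/-- The value functions of the optimal online alternating-subsequence selection
problem: `v 0 y = 0` and
`v (k+1) y = y * v k y + ∫ x in y..1, max (v k y) (1 + v k (1 - x))`. -/
noncomputable def v : ℕ → ℝ → ℝ
  | 0, _ => 0
  | (k+1), y => y * v k y + ∫ x in y..(1:ℝ), max (v k y) (1 + v k (1 - x))

/-- The optimal threshold function:
`g k y = inf {x ∈ [y,1] : v (k-1) y ≤ 1 + v (k-1) (1-x)}`. -/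
noncomputable def g (k : ℕ) (y : ℝ) : ℝ :=
  sInf {x : ℝ | x ∈ Set.Icc y 1 ∧ v (k-1) y ≤ 1 + v (k-1) (1 - x)}

/-- The minimal fixed point `ξ k = inf {y ∈ [0,1] : g k y = y}`. -/
noncomputable def xi (k : ℕ) : ℝ :=
  sInf {y : ℝ | y ∈ Set.Icc (0:ℝ) 1 ∧ g k y = y}

lemma v_succ (m : ℕ) (y : ℝ) :
    v (m+1) y = y * v m y + ∫ x in y..(1:ℝ), max (v m y) (1 + v m (1 - x)) := rfl

lemma v_basic (m : ℕ) :
    (∀ y ∈ Icc (0:ℝ) 1, 0 ≤ v m y) ∧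
    (∀ a ∈ Icc (0:ℝ) 1, ∀ b ∈ Icc (0:ℝ) 1, a ≤ b → v m b ≤ v m a) := by
  induction m with
  | zero => simp [v]
  | succ m ih =>
    obtain ⟨hnn, hanti⟩ := ih
    have hmono : ∀ z : ℝ, MonotoneOn (fun x => max (v m z) (1 + v m (1 - x))) (Icc (0:ℝ) 1) := by
      intro z x1 h1 x2 h2 h12
      have hv : v m (1 - x1) ≤ v m (1 - x2) := by
        refine hanti (1 - x2) ⟨by linarith [h2.2], by linarith [h2.1]⟩
          (1 - x1) ⟨by linarith [h1.2], by linarith [h1.1]⟩ (by linarith)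
      exact max_le_max le_rfl (by linarith)
    have hint : ∀ z a b : ℝ, a ∈ Icc (0:ℝ) 1 → b ∈ Icc (0:ℝ) 1 →
        IntervalIntegrable (fun x => max (v m z) (1 + v m (1 - x))) volume a b := by
      intro z a b ha hb
      exact ((hmono z).mono (uIcc_subset_Icc ha hb)).intervalIntegrable
    constructor
    · intro y hy
      have h1 : (0:ℝ) ≤ ∫ x in y..(1:ℝ), max (v m y) (1 + v m (1 - x)) := by
        apply intervalIntegral.integral_nonneg hy.2
        intro x hx
        exact le_trans (hnn y hy) (le_max_left _ _)
      have h2 := mul_nonneg hy.1 (hnn y hy)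
      rw [v_succ]; linarith
    · intro a ha b hb hab
      have hva : v m b ≤ v m a := hanti a ha b hb hab
      have h1R : (1:ℝ) ∈ Icc (0:ℝ) 1 := by norm_num
      have hsplit : (∫ x in a..(1:ℝ), max (v m a) (1 + v m (1 - x)))
          = (∫ x in a..b, max (v m a) (1 + v m (1 - x)))
            + ∫ x in b..(1:ℝ), max (v m a) (1 + v m (1 - x)) :=
        (intervalIntegral.integral_add_adjacent_intervals (hint a a b ha hb)
          (hint a b 1 hb h1R)).symm
      have h1 : (b - a) * v m a ≤ ∫ x in a..b, max (v m a) (1 + v m (1 - x)) := by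
        have := intervalIntegral.integral_mono_on hab intervalIntegrable_const
          (hint a a b ha hb) (fun x _ => le_max_left (v m a) (1 + v m (1 - x)))
        simpa using this
      have h2 : (∫ x in b..(1:ℝ), max (v m b) (1 + v m (1 - x)))
          ≤ ∫ x in b..(1:ℝ), max (v m a) (1 + v m (1 - x)) :=
        intervalIntegral.integral_mono_on hb.2 (hint b b 1 hb h1R) (hint a b 1 hb h1R)
          (fun x _ => max_le_max hva le_rfl)
      have h3 : b * v m b ≤ b * v m a := mul_le_mul_of_nonneg_left hva (le_trans ha.1 hab)
      rw [v_succ, v_succ, hsplit]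
      rw [sub_mul] at h1
      linarith

lemma v_key : ∀ m : ℕ, ∀ y ∈ Icc (1/3 : ℝ) 1, v m y ≤ 1 + v m (1 - y) := by
  intro m
  induction m with
  | zero => intro y _; simp [v]
  | succ m ih =>
    intro y hy
    have hy0 : (0:ℝ) ≤ y := by linarith [hy.1]
    have hyI : y ∈ Icc (0:ℝ) 1 := ⟨hy0, hy.2⟩
    have h1yI : (1 - y) ∈ Icc (0:ℝ) 1 := ⟨by linarith [hy.2], by linarith⟩
    rcases le_or_gt (1/2 : ℝ) y with hc | hc
    · have := (v_basic (m+1)).2 (1 - y) h1yI y hyI (by linarith)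
      linarith
    · obtain ⟨hnn, hanti⟩ := v_basic m
      have hmono : ∀ z : ℝ, MonotoneOn (fun x => max (v m z) (1 + v m (1 - x))) (Icc (0:ℝ) 1) := by
        intro z x1 h1 x2 h2 h12
        have hv : v m (1 - x1) ≤ v m (1 - x2) :=
          hanti (1 - x2) ⟨by linarith [h2.2], by linarith [h2.1]⟩
            (1 - x1) ⟨by linarith [h1.2], by linarith [h1.1]⟩ (by linarith)
        exact max_le_max le_rfl (by linarith)
      have hint : ∀ z a b : ℝ, a ∈ Icc (0:ℝ) 1 → b ∈ Icc (0:ℝ) 1 →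
          IntervalIntegrable (fun x => max (v m z) (1 + v m (1 - x))) volume a b := by
        intro z a b ha hb
        exact ((hmono z).mono (uIcc_subset_Icc ha hb)).intervalIntegrable
      have hmono2 : MonotoneOn (fun x : ℝ => 1 + v m (1 - x)) (Icc (0:ℝ) 1) := by
        intro x1 h1 x2 h2 h12
        have hv : v m (1 - x1) ≤ v m (1 - x2) :=
          hanti (1 - x2) ⟨by linarith [h2.2], by linarith [h2.1]⟩
            (1 - x1) ⟨by linarith [h1.2], by linarith [h1.1]⟩ (by linarith)
        simpa using hv
      have hint2 : ∀ a b : ℝ, a ∈ Icc (0:ℝ) 1 → b ∈ Icc (0:ℝ) 1 →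
          IntervalIntegrable (fun x : ℝ => 1 + v m (1 - x)) volume a b := by
        intro a b ha hb
        exact (hmono2.mono (uIcc_subset_Icc ha hb)).intervalIntegrable
      have h1R : (1:ℝ) ∈ Icc (0:ℝ) 1 := by norm_num
      have hab : y ≤ 1 - y := by linarith
      have hIH : v m y ≤ 1 + v m (1 - y) := ih y hy
      -- split the integral at 1 - y
      have hsplit : (∫ x in y..(1:ℝ), max (v m y) (1 + v m (1 - x)))
          = (∫ x in y..(1-y), max (v m y) (1 + v m (1 - x)))
            + ∫ x in (1-y)..(1:ℝ), max (v m y) (1 + v m (1 - x)) :=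
        (intervalIntegral.integral_add_adjacent_intervals (hint y y (1-y) hyI h1yI)
          (hint y (1-y) 1 h1yI h1R)).symm
      -- on [y, 1-y] the max is the second term
      have hcong1 : (∫ x in y..(1-y), max (v m y) (1 + v m (1 - x)))
          = ∫ x in y..(1-y), (1 + v m (1 - x)) := by
        apply intervalIntegral.integral_congr
        intro x hx
        rw [uIcc_of_le hab] at hx
        have hx1 : 1 - x ∈ Icc (0:ℝ) 1 := ⟨by linarith [hx.2, hy0], by linarith [hx.1, hy0]⟩
        have hvb : v m (1 - y) ≤ v m (1 - x) :=
          hanti (1 - x) hx1 (1 - y) h1yI (by linarith [hx.1])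
        exact max_eq_right (by linarith)
      -- bound that piece
      have hbd1 : (∫ x in y..(1-y), (1 + v m (1 - x))) ≤ 1 - y - y + (1 - y - y) * v m y := by
        have := intervalIntegral.integral_mono_on (g := fun _ => 1 + v m y) hab
          (hint2 y (1-y) hyI h1yI)
          intervalIntegrable_const (fun x hx => by
            have hx1 : 1 - x ∈ Icc (0:ℝ) 1 := ⟨by linarith [hx.2, hy0], by linarith [hx.1, hy0]⟩
            have : v m (1 - x) ≤ v m y := hanti y hyI (1 - x) hx1 (by linarith [hx.2])
            simpa using this)
        simpa using this
      -- on [1-y, 1] the two integrands agree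
      have hcong2 : (∫ x in (1-y)..(1:ℝ), max (v m y) (1 + v m (1 - x)))
          = ∫ x in (1-y)..(1:ℝ), max (v m (1 - y)) (1 + v m (1 - x)) := by
        apply intervalIntegral.integral_congr
        intro x hx
        rw [uIcc_of_le h1yI.2] at hx
        have hx1 : 1 - x ∈ Icc (0:ℝ) 1 := ⟨by linarith [hx.2], by linarith [hx.1, hc]⟩
        have hvy : v m y ≤ v m (1 - x) := hanti (1 - x) hx1 y hyI (by linarith [hx.1])
        have hvby : v m (1 - y) ≤ v m y := hanti y hyI (1 - y) h1yI hab
        show max (v m y) (1 + v m (1 - x)) = max (v m (1 - y)) (1 + v m (1 - x))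
        rw [max_eq_right (by linarith), max_eq_right (by linarith)]
      rw [v_succ, v_succ, hsplit, hcong1, hcong2]
      nlinarith [hbd1, hIH, hy.1, hc]


/-- For every `k ≥ 1` and every `y ∈ [1/3, 1]`, one has `g k y = y`. -/
theorem threshold_fixed_points :
    ∀ k : ℕ, 1 ≤ k → ∀ y : ℝ, y ∈ Set.Icc (1/3 : ℝ) 1 → g k y = y := by
  intro k _ y hy
  have h3 : v (k-1) y ≤ 1 + v (k-1) (1 - y) := v_key (k-1) y hy
  have hyS : y ∈ {x : ℝ | x ∈ Set.Icc y 1 ∧ v (k-1) y ≤ 1 + v (k-1) (1 - x)} :=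
    ⟨⟨le_refl y, hy.2⟩, h3⟩
  refine le_antisymm (csInf_le ⟨y, fun x hx => hx.1.1⟩ hyS)
    (le_csInf ⟨y, hyS⟩ fun x hx => hx.1.1)
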